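/- arXiv:2203.03491 — 2 statements merged into one kernel-verified Lean document; each statement's English description precedes it below -/
import Mathlib

section
/- Let 𝓗 be a family of finite simple graphs and let G be an fs(𝓗)-free graph that is not critically 𝓗-exist. Then G is 𝓗-free if and only if every G-contraction is 𝓗-free. -/
open SimpleGraph

/-- The contraction `G/uv` of the edge between `u` and `v`: the vertex `v` is deleted
and merged into `u`, whose new neighbourhood is `(N(u) ∪ N(v)) \\ {u, v}`. -/
def SimpleGraph.contractEdge {V : Type*} (G : SimpleGraph V) (u v : V) :
    SimpleGraph {x : V // x ≠ v} :=
  SimpleGraph.fromRel fun a b => G.Adj a.1 b.1 ∨ (a.1 = u ∧ G.Adj v b.1)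

/-- A family of finite simple graphs, whose members are given (up to isomorphism)
as graphs on `Fin n`. -/
abbrev GraphFamily := Set (Σ n : ℕ, SimpleGraph (Fin n))

/-- `G` is `ℋ`-free: no induced subgraph of `G` is isomorphic to a member of `ℋ`. -/
def FamFree {V : Type*} (G : SimpleGraph V) (ℋ : GraphFamily) : Prop :=
  ∀ H ∈ ℋ, ¬ Nonempty (H.2 ↪g G)

/-- Every `G`-contraction is `ℋ`-free. -/
def AllContractionsFamFree {V : Type*} (G : SimpleGraph V) (ℋ : GraphFamily) : Prop :=
  ∀ u v, G.Adj u v → FamFree (G.contractEdge u v) ℋ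

/-- `G` is `ℋ`-split: some `G`-contraction is isomorphic to a member of `ℋ`. -/
def FamSplit {V : Type*} (G : SimpleGraph V) (ℋ : GraphFamily) : Prop :=
  ∃ u v, G.Adj u v ∧ ∃ H ∈ ℋ, Nonempty (H.2 ≃g G.contractEdge u v)

/-- `fs(ℋ)`: the family of all `ℋ`-free-split graphs. -/
def FreeSplitFam (ℋ : GraphFamily) : GraphFamily :=
  {J | FamFree J.2 ℋ ∧ FamSplit J.2 ℋ}


lemma contractEdge_adj {V : Type*} (G : SimpleGraph V) (u v : V) (a b : {x : V // x ≠ v}) :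
    (G.contractEdge u v).Adj a b ↔ a.1 ≠ b.1 ∧
      ((G.Adj a.1 b.1 ∨ (a.1 = u ∧ G.Adj v b.1)) ∨ (G.Adj b.1 a.1 ∨ (b.1 = u ∧ G.Adj v a.1))) := by
  simp [SimpleGraph.contractEdge, SimpleGraph.fromRel_adj, Subtype.ext_iff, ne_eq]

/-- Contraction commutes with graph isomorphism. -/
def contractEdgeIso {α β : Type*} {A : SimpleGraph α} {B : SimpleGraph β}
    (e : A ≃g B) (u v : α) :
    A.contractEdge u v ≃g B.contractEdge (e u) (e v) where
  toEquiv := e.toEquiv.subtypeEquiv fun x => (not_congr e.toEquiv.injective.eq_iff).symm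
  map_rel_iff' := by
    intro a b
    have h1 : ∀ x y : α, B.Adj (e x) (e y) ↔ A.Adj x y := fun x y => e.map_rel_iff
    have h2 : ∀ x y : α, (e x = e y) ↔ x = y := fun _ _ => e.toEquiv.injective.eq_iff
    simp only [contractEdge_adj, Equiv.subtypeEquiv_apply, ne_eq, RelIso.coe_fn_toEquiv, h1, h2]

lemma famFree_of_embedding {α β : Type*} {A : SimpleGraph α} {B : SimpleGraph β}
    (f : A ↪g B) {ℋ : GraphFamily} (h : FamFree B ℋ) : FamFree A ℋ :=
  fun H hH hne => h H hH (hne.elim fun g => ⟨f.comp g⟩)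

lemma key_stmt2 {V : Type*} [Fintype V] (G : SimpleGraph V) (ℋ : GraphFamily)
    (hfs : FamFree G (FreeSplitFam ℋ)) (hfree : FamFree G ℋ) :
    AllContractionsFamFree G ℋ := by
  intro u v huv H hH hne
  obtain ⟨f⟩ := hne
  by_cases hu : ∃ i, ((f i : {x : V // x ≠ v}) : V) = u
  · -- the merged vertex is in the range of f
    obtain ⟨i0, hi0⟩ := hu
    set T : Set V := insert v (Set.range fun i => ((f i : {x : V // x ≠ v}) : V)) with hT
    have hvT : v ∈ T := Set.mem_insert _ _
    have huT : u ∈ T := Set.mem_insert_of_mem _ ⟨i0, hi0⟩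
    have huv' : (G.induce T).Adj ⟨u, huT⟩ ⟨v, hvT⟩ := huv
    -- the isomorphism ψ : H ≃g (G.induce T)/u'v'
    let toFun : Fin H.1 → {x : ↥T // x ≠ ⟨v, hvT⟩} := fun i =>
      ⟨⟨(f i).1, Set.mem_insert_of_mem _ ⟨i, rfl⟩⟩,
        fun h => (f i).2 (congrArg Subtype.val h)⟩
    have hbij : Function.Bijective toFun := by
      constructor
      · intro i j hij
        exact f.injective (Subtype.ext (congrArg (fun x => x.1.1) hij))
      · rintro ⟨⟨x, hx⟩, hnv⟩
        have hxv : x ≠ v := fun h => hnv (Subtype.ext h)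
        rcases hx with h | ⟨i, hi⟩
        · exact absurd h hxv
        · exact ⟨i, Subtype.ext (Subtype.ext hi)⟩
    have hmap : ∀ a b : Fin H.1,
        ((G.induce T).contractEdge ⟨u, huT⟩ ⟨v, hvT⟩).Adj (toFun a) (toFun b) ↔ H.2.Adj a b := by
      intro a b
      rw [← f.map_rel_iff]
      simp only [contractEdge_adj, comap_adj, Function.Embedding.coe_subtype, ne_eq,
        Subtype.mk.injEq, Subtype.ext_iff]
      exact Iff.rfl
    let ψ : H.2 ≃g (G.induce T).contractEdge ⟨u, huT⟩ ⟨v, hvT⟩ :=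
      ⟨Equiv.ofBijective toFun hbij, hmap _ _⟩
    haveI : Fintype ↥T := Fintype.ofFinite _
    let e : ↥T ≃ Fin (Fintype.card ↥T) := Fintype.equivFin ↥T
    let J2 : SimpleGraph (Fin (Fintype.card ↥T)) := (G.induce T).comap e.symm.toEmbedding
    let φ : J2 ≃g G.induce T := SimpleGraph.Iso.comap e.symm (G.induce T)
    have hembJ : Nonempty (J2 ↪g G) :=
      ⟨(SimpleGraph.Embedding.induce T).comp φ.toEmbedding⟩
    refine hfs ⟨Fintype.card ↥T, J2⟩ ⟨?_, ?_⟩ hembJ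
    · exact famFree_of_embedding ((SimpleGraph.Embedding.induce T).comp φ.toEmbedding) hfree
    · refine ⟨φ.symm ⟨u, huT⟩, φ.symm ⟨v, hvT⟩, φ.symm.map_rel_iff.mpr huv', H, hH,
        ⟨ψ.trans (contractEdgeIso φ.symm ⟨u, huT⟩ ⟨v, hvT⟩)⟩⟩
  · -- u is not in the range: H embeds into G itself
    push_neg at hu
    refine hfree H hH ⟨⟨⟨fun i => (f i).1, fun i j hij => f.injective (Subtype.ext hij)⟩, ?_⟩⟩
    intro i j
    rw [← f.map_rel_iff, contractEdge_adj]
    constructor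
    · intro h
      exact ⟨h.ne, Or.inl (Or.inl h)⟩
    · rintro ⟨hne, (h | ⟨he, _⟩) | (h | ⟨he, _⟩)⟩
      · exact h
      · exact absurd he (hu i)
      · exact h.symm
      · exact absurd he (hu j)

/-- If `G` is `fs(ℋ)`-free and not critically `ℋ`-exist, then `G` is `ℋ`-free
if and only if every `G`-contraction is `ℋ`-free. -/
theorem stmt2 {V : Type*} [Fintype V] (G : SimpleGraph V) (ℋ : GraphFamily)
    (hfs : FamFree G (FreeSplitFam ℋ))
    (hnotcrit : ¬ ((¬ FamFree G ℋ) ∧ AllContractionsFamFree G ℋ)) :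
    FamFree G ℋ ↔ AllContractionsFamFree G ℋ := by
  constructor
  · exact fun h => key_stmt2 G ℋ hfs h
  · intro hall
    by_contra hnf
    exact hnotcrit ⟨hnf, hall⟩
end

section
/- A finite simple graph is C_4-free-split if and only if it is isomorphic to the cycle C_5. -/
/-!
If `G/uv ≅ C₄`, label the square `m p q r` with `m` the merged vertex. Then `p q r` is an
induced path of `G`, `q` is adjacent to neither `u` nor `v`, and each of `p`, `r` is adjacent to
`u` or `v`. A vertex of `{u, v}` adjacent to both `p` and `r` would span an induced `C₄` with
`p q r`, so `p` and `r` hang off different ends of `uv`, and `G`, whose vertices are exactly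
`u, v, p, q, r`, is a 5-cycle. Conversely, `C₅` has no induced `C₄` and contracting one of its
edges gives `C₄`; both properties are invariant under isomorphism.
-/

open SimpleGraph

/-- `J` is `G`-free-split (for a single graph `G`): `J` is `G`-free (no induced
subgraph of `J` is isomorphic to `G`) and some `J`-contraction is isomorphic to `G`. -/
def IsFreeSplitOf {A B : Type*} (J : SimpleGraph A) (G : SimpleGraph B) : Prop :=
  (¬ Nonempty (G ↪g J)) ∧ ∃ a b, J.Adj a b ∧ Nonempty (G ≃g J.contractEdge a b)

namespace SimpleGraph

variable {V W : Type*} {G : SimpleGraph V} {u v : V}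

lemma contractEdge_adj_of_ne {a b : {x : V // x ≠ v}} (ha : a.1 ≠ u) (hb : b.1 ≠ u) :
    (G.contractEdge u v).Adj a b ↔ G.Adj a b := by
  simp only [contractEdge, fromRel_adj, ha, hb, false_and, or_false, G.adj_comm b.1, or_self]
  exact ⟨And.right, fun h => ⟨fun hab => h.ne (congrArg Subtype.val hab), h⟩⟩

lemma contractEdge_adj_merged (huv : u ≠ v) {b : {x : V // x ≠ v}} (hb : b.1 ≠ u) :
    (G.contractEdge u v).Adj ⟨u, huv⟩ b ↔ G.Adj u b ∨ G.Adj v b := by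
  simp only [contractEdge, fromRel_adj, hb, false_and, or_false, true_and, G.adj_comm b.1]
  refine ⟨fun h => by tauto, fun h => ⟨fun hub => hb (congrArg Subtype.val hub).symm, by tauto⟩⟩

def Iso.contractEdge {H : SimpleGraph W} (φ : G ≃g H) (u v : V) :
    G.contractEdge u v ≃g H.contractEdge (φ u) (φ v) where
  toEquiv := φ.toEquiv.subtypeEquiv fun _ => φ.injective.ne_iff.symm
  map_rel_iff' := by
    intro a b
    simp only [SimpleGraph.contractEdge, fromRel_adj, Equiv.subtypeEquiv_apply, ne_eq,
      Subtype.ext_iff, RelIso.coe_fn_toEquiv, φ.map_adj_iff, φ.injective.eq_iff]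

def cycleGraph.rotate {n : ℕ} [NeZero n] (k : Fin n) : cycleGraph n ≃g cycleGraph n where
  toEquiv := Equiv.addRight k
  map_rel_iff' := by simp [cycleGraph_adj', add_sub_add_right_eq_sub]

lemma cycleGraph.exists_iso_apply_zero_eq {n : ℕ} [NeZero n] {H : SimpleGraph W}
    (φ : cycleGraph n ≃g H) (x : W) : ∃ ψ : cycleGraph n ≃g H, ψ 0 = x :=
  ⟨(cycleGraph.rotate (φ.symm x)).trans φ, by simp [cycleGraph.rotate]⟩

lemma nonempty_cycleGraph_four_embedding_of_adj {a b c d : V}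
    (hab : G.Adj a b) (hbc : G.Adj b c) (hcd : G.Adj c d) (hda : G.Adj d a)
    (hac : ¬G.Adj a c) (hbd : ¬G.Adj b d) (hac' : a ≠ c) (hbd' : b ≠ d) :
    Nonempty (cycleGraph 4 ↪g G) := by
  have hinj : Function.Injective ![a, b, c, d] := by
    intro i j hij
    fin_cases i <;> fin_cases j <;>
      simp only [Fin.zero_eta, Fin.mk_one, Fin.reduceFinMk, Matrix.cons_val_zero,
        Matrix.cons_val_one, Matrix.cons_val] at hij ⊢ <;>
      grind [G.ne_of_adj, G.adj_comm]
  have hadj : ∀ i j, G.Adj (![a, b, c, d] i) (![a, b, c, d] j) ↔ (cycleGraph 4).Adj i j := by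
    intro i j
    fin_cases i <;> fin_cases j <;>
      simp only [Fin.zero_eta, Fin.mk_one, Fin.reduceFinMk, Matrix.cons_val_zero,
        Matrix.cons_val_one, Matrix.cons_val, SimpleGraph.irrefl, cycleGraph_adj, Fin.reduceSub,
        Fin.reduceEq] <;>
      grind [G.adj_comm]
  exact ⟨⟨⟨_, hinj⟩, hadj _ _⟩⟩

lemma nonempty_iso_cycleGraph_five_of_adj {a b c d e : V}
    (hcover : ∀ x, x = a ∨ x = b ∨ x = c ∨ x = d ∨ x = e)
    (hab : G.Adj a b) (hbc : G.Adj b c) (hcd : G.Adj c d) (hde : G.Adj d e) (hea : G.Adj e a)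
    (hac : ¬G.Adj a c) (had : ¬G.Adj a d) (hbd : ¬G.Adj b d) (hbe : ¬G.Adj b e)
    (hce : ¬G.Adj c e) : Nonempty (G ≃g cycleGraph 5) := by
  have hinj : Function.Injective ![a, b, c, d, e] := by
    intro i j hij
    fin_cases i <;> fin_cases j <;>
      simp only [Fin.zero_eta, Fin.mk_one, Fin.reduceFinMk, Matrix.cons_val_zero,
        Matrix.cons_val_one, Matrix.cons_val] at hij ⊢ <;>
      grind [G.ne_of_adj, G.adj_comm]
  have hsurj : Function.Surjective ![a, b, c, d, e] := by
    intro x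
    rcases hcover x with rfl | rfl | rfl | rfl | rfl
    exacts [⟨0, rfl⟩, ⟨1, rfl⟩, ⟨2, rfl⟩, ⟨3, rfl⟩, ⟨4, rfl⟩]
  have hadj : ∀ i j, G.Adj (![a, b, c, d, e] i) (![a, b, c, d, e] j) ↔ (cycleGraph 5).Adj i j := by
    intro i j
    fin_cases i <;> fin_cases j <;>
      simp only [Fin.zero_eta, Fin.mk_one, Fin.reduceFinMk, Matrix.cons_val_zero,
        Matrix.cons_val_one, Matrix.cons_val, SimpleGraph.irrefl, cycleGraph_adj, Fin.reduceSub,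
        Fin.reduceEq] <;>
      grind [G.adj_comm]
  exact ⟨(⟨Equiv.ofBijective _ ⟨hinj, hsurj⟩, hadj _ _⟩ : cycleGraph 5 ≃g G).symm⟩

lemma nonempty_iso_cycleGraph_five_of_path (hfree : ¬Nonempty (cycleGraph 4 ↪g G)) {p q r : V}
    (hcover : ∀ x, x = u ∨ x = v ∨ x = p ∨ x = q ∨ x = r) (huv : G.Adj u v)
    (hpq : G.Adj p q) (hqr : G.Adj q r) (hpr : ¬G.Adj p r) (hpr' : p ≠ r)
    (hq : ¬(G.Adj u q ∨ G.Adj v q)) (hqu : q ≠ u) (hqv : q ≠ v)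
    (hp : G.Adj u p ∨ G.Adj v p) (hr : G.Adj u r ∨ G.Adj v r) :
    Nonempty (G ≃g cycleGraph 5) := by
  obtain ⟨huq, hvq⟩ := not_or.1 hq
  have hend : ∀ w, ¬G.Adj w q → q ≠ w → G.Adj w p → ¬G.Adj w r := fun w hwq hqw hwp hwr =>
    hfree (nonempty_cycleGraph_four_embedding_of_adj hwp hpq hqr hwr.symm hwq hpr hqw.symm hpr')
  rcases hp with hup | hvp
  · have hur := hend u huq hqu hup
    have hvr := hr.resolve_left hur
    have hvp : ¬G.Adj v p := fun hvp => hend v hvq hqv hvp hvr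
    exact nonempty_iso_cycleGraph_five_of_adj (fun x => by have := hcover x; tauto)
      huv.symm hup hpq hqr hvr.symm hvp hvq huq hur hpr
  · have hvr := hend v hvq hqv hvp
    have hur := hr.resolve_right hvr
    have hup : ¬G.Adj u p := fun hup => hend u huq hqu hup hur
    exact nonempty_iso_cycleGraph_five_of_adj hcover huv hvp hpq hqr hur.symm hup huq hvq hvr hpr

lemma nonempty_iso_cycleGraph_five_of_contractEdge (hfree : ¬Nonempty (cycleGraph 4 ↪g G))
    (huv : G.Adj u v) (φ : cycleGraph 4 ≃g G.contractEdge u v) : Nonempty (G ≃g cycleGraph 5) := by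
  obtain ⟨ψ, hψ⟩ := cycleGraph.exists_iso_apply_zero_eq φ ⟨u, huv.ne⟩
  have hne : ∀ k, k ≠ 0 → (ψ k).1 ≠ u := fun k hk h => hk (ψ.injective (hψ ▸ Subtype.ext h))
  have hadj : ∀ i j, i ≠ 0 → j ≠ 0 → (G.Adj (ψ i) (ψ j) ↔ (cycleGraph 4).Adj i j) :=
    fun i j hi hj => (contractEdge_adj_of_ne (hne i hi) (hne j hj)).symm.trans ψ.map_adj_iff
  have hmerged : ∀ j, j ≠ 0 → (G.Adj u (ψ j) ∨ G.Adj v (ψ j) ↔ (cycleGraph 4).Adj 0 j) :=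
    fun j hj => (contractEdge_adj_merged huv.ne (hne j hj)).symm.trans (hψ ▸ ψ.map_adj_iff)
  have hcover : ∀ x, x = u ∨ x = v ∨ x = ψ 1 ∨ x = ψ 2 ∨ x = ψ 3 := by
    intro x
    by_cases hxv : x = v
    · exact Or.inr (Or.inl hxv)
    obtain ⟨k, hk⟩ := ψ.surjective ⟨x, hxv⟩
    have hx : x = ψ k := congrArg Subtype.val hk.symm
    fin_cases k <;> simp_all
  refine nonempty_iso_cycleGraph_five_of_path hfree hcover huv ?_ ?_ ?_ ?_ ?_ ?_ ?_ ?_ ?_ <;>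
    simp only [hadj, hmerged, hne, (ψ _).2, ne_eq, Subtype.val_inj, ψ.injective.eq_iff,
      Fin.reduceEq, one_ne_zero, not_false_eq_true] <;>
    decide

set_option maxRecDepth 10000 in
lemma cycleGraph_five_not_nonempty_cycleGraph_four_embedding :
    ¬Nonempty (cycleGraph 4 ↪g cycleGraph 5) := by
  rintro ⟨f⟩
  have : ¬∃ g : Fin 4 → Fin 5, Function.Injective g ∧
      ∀ i j, (cycleGraph 5).Adj (g i) (g j) ↔ (cycleGraph 4).Adj i j := by decide
  exact this ⟨f, f.injective, fun _ _ => f.map_adj_iff⟩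

lemma nonempty_cycleGraph_four_iso_contractEdge_cycleGraph_five :
    Nonempty (cycleGraph 4 ≃g (cycleGraph 5).contractEdge 0 1) := by
  let f : Fin 4 → {x : Fin 5 // x ≠ 1} := fun i => ⟨![0, 2, 3, 4] i, by fin_cases i <;> decide⟩
  have hf : Function.Bijective f := by decide
  refine ⟨⟨Equiv.ofBijective f hf, fun {i j} => ?_⟩⟩
  simp only [Equiv.ofBijective_apply, SimpleGraph.contractEdge, fromRel_adj]
  revert i j
  decide

end SimpleGraph

lemma IsFreeSplitOf.of_iso {A A' B : Type*} {J : SimpleGraph A} {J' : SimpleGraph A'}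
    {G : SimpleGraph B} (h : IsFreeSplitOf J G) (φ : J ≃g J') : IsFreeSplitOf J' G := by
  obtain ⟨hfree, a, b, hab, ⟨ψ⟩⟩ := h
  exact ⟨fun ⟨f⟩ => hfree ⟨f.trans φ.symm.toEmbedding⟩, φ a, φ b, φ.map_adj_iff.2 hab,
    ⟨ψ.trans (φ.contractEdge a b)⟩⟩

theorem stmt19_general {V : Type*} (G : SimpleGraph V) :
    IsFreeSplitOf G (cycleGraph 4) ↔ Nonempty (G ≃g cycleGraph 5) := by
  constructor
  · rintro ⟨hfree, u, v, huv, ⟨φ⟩⟩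
    exact nonempty_iso_cycleGraph_five_of_contractEdge hfree huv φ
  · rintro ⟨φ⟩
    obtain ⟨ψ⟩ := nonempty_cycleGraph_four_iso_contractEdge_cycleGraph_five
    have hC5 : IsFreeSplitOf (cycleGraph 5) (cycleGraph 4) :=
      ⟨cycleGraph_five_not_nonempty_cycleGraph_four_embedding, 0, 1, by decide, ⟨ψ⟩⟩
    exact hC5.of_iso φ.symm

/-- A finite simple graph is `C_4`-free-split if and only if it is isomorphic to
the cycle `C_5`. -/
theorem stmt19 {V : Type*} [Fintype V] (G : SimpleGraph V) :
    IsFreeSplitOf G (cycleGraph 4) ↔ Nonempty (G ≃g cycleGraph 5) :=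
  stmt19_general G
end
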